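/- arXiv:2003.04230 — 9 statements merged into one kernel-verified Lean document; each statement's English description precedes it below -/
import Mathlib

section
/- Let R > 0 and m > 1, and set C_m := max{10000, 200·2^{2/(m−1)}}. Let ρ : [R, 3R] → ℝ be nonnegative and nonincreasing. Then there exists r ∈ [R, 2R] such that ∫_r^{3R} ρ(x)^m dx ≤ (C_m / R) · ρ(R)^{m−1} · ∫_r^{3R} (x − r)·ρ(x) dx. -/
/-!
Suppose the inequality fails for every `r ∈ [R, 2R]` and put `w r = ∫_r^{3R} ρ`. Monotonicity gives
`∫_r^{3R} ρ^m ≤ ρ(r)^(m-1) w(r)`, and the bathtub principle gives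
`w(r)² ≤ 2 ρ(r) ∫_r^{3R} (x - r) ρ(x) dx`; together they force `K w(r) ≤ 2 ρ(r)^m` with
`K = C_m ρ(R)^(m-1) / R`. As `-w' = ρ`, this is the differential inequality `-w' ≥ (K w / 2)^(1/m)`,
along which `w^(1 - 1/m)` decreases at a definite rate. Over an interval of length `R` it would
become negative unless `(1 - 1/m) C_m ≤ 4`, which the size of `C_m` rules out.
-/

open MeasureTheory Set Filter Topology

theorem ContinuousOn.le_of_forall_eventually_nhdsGT_le {α β : Type*}
    [ConditionallyCompleteLinearOrder α] [TopologicalSpace α] [OrderTopology α]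
    [DenselyOrdered α] [LinearOrder β] [TopologicalSpace β] [OrderClosedTopology β]
    {f : α → β} {a b : α} (hab : a ≤ b) (hf : ContinuousOn f (Icc a b))
    (hloc : ∀ x ∈ Ico a b, ∀ᶠ t in 𝓝[>] x, f t ≤ f x) :
    f b ≤ f a := by
  have hclosed : IsClosed ({t | f t ≤ f a} ∩ Icc a b) := by
    rw [inter_comm]
    exact isClosed_Icc.isClosed_le hf continuousOn_const
  refine hclosed.Icc_subset_of_forall_mem_nhdsWithin (le_refl (f a)) (fun x hx => ?_)
    (right_mem_Icc.2 hab)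
  filter_upwards [hloc x hx.2] with t ht using ht.trans hx.1

theorem Real.rpow_add_mul_sub_le_rpow {a b α : ℝ} (ha : 0 < a) (hb : 0 ≤ b) (hα0 : 0 ≤ α)
    (hα1 : α ≤ 1) : b ^ α + α * a ^ (α - 1) * (a - b) ≤ a ^ α := by
  have h := rpow_one_add_le_one_add_mul_self (s := b / a - 1) (by linarith [div_nonneg hb ha.le])
    hα0 hα1
  rw [add_sub_cancel, div_rpow hb ha.le, div_le_iff₀ (rpow_pos_of_pos ha α)] at h
  have : a ^ α = a ^ (α - 1) * a := by rw [← rpow_add_one ha.ne', sub_add_cancel]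
  calc b ^ α + α * a ^ (α - 1) * (a - b)
      ≤ (1 + α * (b / a - 1)) * a ^ α + α * a ^ (α - 1) * (a - b) := by gcongr
    _ = a ^ α := by rw [this]; field_simp; ring

theorem le_rpow_of_forall_add_mul_rpow_le {w : ℝ → ℝ} {a b c p : ℝ} (hab : a ≤ b) (hc : 0 ≤ c)
    (hp0 : 0 ≤ p) (hp1 : p ≤ 1) (hw : ContinuousOn w (Icc a b)) (hpos : ∀ s ∈ Icc a b, 0 < w s)
    (hstep : ∀ r ∈ Icc a b, ∀ s ∈ Icc a b, r ≤ s → w s + (s - r) * c * w s ^ p ≤ w r) :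
    (1 - p) * c / 2 * (b - a) ≤ w a ^ (1 - p) := by
  have hg : ContinuousOn (fun s => w s ^ (1 - p) + (1 - p) * c / 2 * s) (Icc a b) :=
    (hw.rpow_const fun s hs => Or.inl (hpos s hs).ne').add (continuousOn_const.mul continuousOn_id)
  suffices key : w b ^ (1 - p) + (1 - p) * c / 2 * b ≤ w a ^ (1 - p) + (1 - p) * c / 2 * a by
    have := Real.rpow_nonneg (hpos b ⟨hab, le_rfl⟩).le (1 - p)
    linarith
  refine hg.le_of_forall_eventually_nhdsGT_le hab fun x hx => ?_
  have hxI : x ∈ Icc a b := Ico_subset_Icc_self hx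
  have hwx := hpos x hxI
  -- the factor `1 / 2` in the rate: close to the right of `x`, `w` stays above `w x / 2`
  have hnear : ∀ᶠ t in 𝓝[>] x, w x / 2 < w t :=
    nhdsWithin_le_of_mem (Icc_mem_nhdsGT_of_mem hx)
      ((hw x hxI).eventually_const_lt (by linarith))
  filter_upwards [hnear, Ioc_mem_nhdsGT hx.2] with t hwt ht
  have htI : t ∈ Icc a b := ⟨hx.1.trans ht.1.le, ht.2⟩
  have hdrop := hstep x hxI t htI ht.1.le
  have hwt0 := hpos t htI
  have hle : w t ≤ w x := by
    have : 0 ≤ (t - x) * c * w t ^ p := by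
      have := ht.1.le; have := Real.rpow_nonneg hwt0.le p; positivity
    linarith
  have hratio : 1 / 2 ≤ w x ^ (1 - p - 1) * w t ^ p := by
    rw [sub_sub_cancel_left, Real.rpow_neg hwx.le, inv_mul_eq_div,
      ← Real.div_rpow hwt0.le hwx.le]
    calc 1 / 2 ≤ (w t / w x) ^ (1 : ℝ) := by
          rw [Real.rpow_one, le_div_iff₀ hwx]; linarith
      _ ≤ (w t / w x) ^ p :=
          Real.rpow_le_rpow_of_exponent_ge (by positivity) ((div_le_one hwx).2 hle) hp1
  have htangent := Real.rpow_add_mul_sub_le_rpow hwx hwt0.le (sub_nonneg.2 hp1) (by linarith)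
  have h1p : 0 ≤ 1 - p := sub_nonneg.2 hp1
  have hgain : (1 - p) * c / 2 * (t - x) ≤ (1 - p) * w x ^ (1 - p - 1) * (w x - w t) := by
    have := ht.1.le
    calc (1 - p) * c / 2 * (t - x)
        ≤ (1 - p) * (t - x) * c * (w x ^ (1 - p - 1) * w t ^ p) := by
          rw [show (1 - p) * c / 2 * (t - x) = (1 - p) * (t - x) * c * (1 / 2) by ring]
          gcongr
      _ = (1 - p) * w x ^ (1 - p - 1) * ((t - x) * c * w t ^ p) := by ring
      _ ≤ _ := by
          have := Real.rpow_nonneg hwx.le (1 - p - 1)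
          gcongr
          linarith
  linarith

section Antitone

variable {f : ℝ → ℝ} {a b : ℝ}

theorem AntitoneOn.intervalIntegrable_of_subset {c d : ℝ} (hf : AntitoneOn f (Icc a b))
    (hac : a ≤ c) (hcd : c ≤ d) (hdb : d ≤ b) : IntervalIntegrable f volume c d :=
  (hf.mono (by rw [uIcc_of_le hcd]; exact Icc_subset_Icc hac hdb)).intervalIntegrable

theorem AntitoneOn.sub_mul_le_integral (hab : a ≤ b) (hf : AntitoneOn f (Icc a b)) :
    (b - a) * f b ≤ ∫ x in a..b, f x := by
  simpa using intervalIntegral.integral_mono_on hab intervalIntegrable_const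
    (hf.intervalIntegrable_of_subset le_rfl hab le_rfl)
    fun x hx => hf hx (right_mem_Icc.2 hab) hx.2

theorem AntitoneOn.integral_le_sub_mul (hab : a ≤ b) (hf : AntitoneOn f (Icc a b)) :
    ∫ x in a..b, f x ≤ (b - a) * f a := by
  simpa using intervalIntegral.integral_mono_on hab
    (hf.intervalIntegrable_of_subset le_rfl hab le_rfl) intervalIntegrable_const
    fun x hx => hf (left_mem_Icc.2 hab) hx hx.1

theorem AntitoneOn.integral_add_sub_mul_le {r s : ℝ} (hf : AntitoneOn f (Icc a b)) (har : a ≤ r)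
    (hrs : r ≤ s) (hsb : s ≤ b) :
    (∫ x in s..b, f x) + (s - r) * f s ≤ ∫ x in r..b, f x := by
  rw [← intervalIntegral.integral_add_adjacent_intervals
    (hf.intervalIntegrable_of_subset har hrs hsb)
    (hf.intervalIntegrable_of_subset (har.trans hrs) hsb le_rfl)]
  linarith [(hf.mono (Icc_subset_Icc har hsb)).sub_mul_le_integral hrs]

theorem AntitoneOn.continuousOn_integral_left (hab : a ≤ b) (hf : AntitoneOn f (Icc a b)) :
    ContinuousOn (fun s => ∫ x in s..b, f x) (Icc a b) := by
  rw [← uIcc_of_le hab] at hf ⊢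
  exact intervalIntegral.continuousOn_primitive_interval_left
    (hf.integrableOn_isCompact isCompact_uIcc)

end Antitone

theorem sq_integral_le_two_mul_integral_sub_mul {ρ : ℝ → ℝ} {r b : ℝ} (hrb : r ≤ b)
    (hanti : AntitoneOn ρ (Icc r b)) (hnn : ∀ x ∈ Icc r b, 0 ≤ ρ x) :
    (∫ x in r..b, ρ x) ^ 2 ≤ 2 * ρ r * ∫ x in r..b, (x - r) * ρ x := by
  set w := ∫ x in r..b, ρ x
  have hw0 : 0 ≤ w := intervalIntegral.integral_nonneg hrb hnn
  have hwle : w ≤ (b - r) * ρ r := hanti.integral_le_sub_mul hrb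
  rcases (hnn r (left_mem_Icc.2 hrb)).eq_or_lt with hρr | hρr
  · rw [← hρr, mul_zero] at hwle
    rw [le_antisymm hwle hw0, ← hρr]
    simp
  set L := w / ρ r
  have hLρ : L * ρ r = w := div_mul_cancel₀ w hρr.ne'
  have hL0 : 0 ≤ L := by positivity
  have hLb : r + L ≤ b := by
    have : L ≤ b - r := by rw [div_le_iff₀ hρr]; exact hwle
    linarith
  have hint : ∀ c d, r ≤ c → c ≤ d → d ≤ b → IntervalIntegrable ρ volume c d :=
    fun c d => hanti.intervalIntegrable_of_subset
  have hintx : ∀ c d, r ≤ c → c ≤ d → d ≤ b →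
      IntervalIntegrable (fun x => (x - r) * ρ x) volume c d :=
    fun c d h1 h2 h3 => (hint c d h1 h2 h3).continuousOn_mul (by fun_prop)
  have hrL : r ≤ r + L := by linarith
  -- on `[r, r + L]` use `(x - r - L) * (ρ x - ρ r) ≥ 0`, beyond `r + L` use `x - r ≥ L`
  have hnear : L * (∫ x in r..r + L, ρ x) - L ^ 2 / 2 * ρ r ≤ ∫ x in r..r + L, (x - r) * ρ x := by
    have hρL := (hint r (r + L) le_rfl hrL hLb).const_mul L
    have hlinL : IntervalIntegrable (fun x => (x - r - L) * ρ r) volume r (r + L) :=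
      (by fun_prop : Continuous fun x => (x - r - L) * ρ r).intervalIntegrable _ _
    have h := intervalIntegral.integral_mono_on hrL (hρL.add hlinL)
      (hintx r (r + L) le_rfl hrL hLb) fun x hx => by
        have h1 : ρ x ≤ ρ r := hanti (left_mem_Icc.2 hrb) ⟨hx.1, hx.2.trans hLb⟩ hx.1
        show L * ρ x + (x - r - L) * ρ r ≤ (x - r) * ρ x
        nlinarith [hx.2]
    have hlin : ∫ x in r..r + L, (x - r - L) * ρ r = -(L ^ 2 / 2 * ρ r) := by
      simp [intervalIntegral.integral_comp_sub_right (fun x => x - L), integral_id]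
      ring
    rw [intervalIntegral.integral_add hρL hlinL, intervalIntegral.integral_const_mul, hlin] at h
    linarith
  have hfar : L * ∫ x in r + L..b, ρ x ≤ ∫ x in r + L..b, (x - r) * ρ x := by
    rw [← intervalIntegral.integral_const_mul]
    exact intervalIntegral.integral_mono_on hLb ((hint _ _ hrL hLb le_rfl).const_mul L)
      (hintx _ _ hrL hLb le_rfl) fun x hx =>
        mul_le_mul_of_nonneg_right (by linarith [hx.1]) (hnn x ⟨by linarith [hx.1], hx.2⟩)
  have hsplit := intervalIntegral.integral_add_adjacent_intervals
    (hint _ _ le_rfl hrL hLb) (hint _ _ hrL hLb le_rfl)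
  have hsplitx := intervalIntegral.integral_add_adjacent_intervals
    (hintx _ _ le_rfl hrL hLb) (hintx _ _ hrL hLb le_rfl)
  have hg : L * w - L ^ 2 / 2 * ρ r ≤ ∫ x in r..b, (x - r) * ρ x := by
    rw [← hsplitx]; nlinarith
  nlinarith [mul_le_mul_of_nonneg_left hg (by positivity : (0:ℝ) ≤ 2 * ρ r)]

theorem integral_rpow_le_rpow_sub_one_mul_integral {ρ : ℝ → ℝ} {r b m : ℝ} (hrb : r ≤ b)
    (hm : 1 ≤ m) (hanti : AntitoneOn ρ (Icc r b)) (hnn : ∀ x ∈ Icc r b, 0 ≤ ρ x) :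
    ∫ x in r..b, ρ x ^ m ≤ ρ r ^ (m - 1) * ∫ x in r..b, ρ x := by
  have hantim : AntitoneOn (fun x => ρ x ^ m) (Icc r b) := fun x hx y hy hxy =>
    Real.rpow_le_rpow (hnn y hy) (hanti hx hy hxy) (by linarith)
  rw [← intervalIntegral.integral_const_mul]
  refine intervalIntegral.integral_mono_on hrb
    (hantim.intervalIntegrable_of_subset le_rfl hrb le_rfl)
    ((hanti.intervalIntegrable_of_subset le_rfl hrb le_rfl).const_mul _) fun x hx => ?_
  calc ρ x ^ m = ρ x ^ (m - 1) * ρ x := by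
        rw [← Real.rpow_add_one' (hnn x hx) (by linarith), sub_add_cancel]
    _ ≤ ρ r ^ (m - 1) * ρ x := mul_le_mul_of_nonneg_right
        (Real.rpow_le_rpow (hnn x hx) (hanti (left_mem_Icc.2 hrb) hx hx.1) (by linarith))
        (hnn x hx)

theorem mul_integral_le_two_mul_rpow_of_lt {ρ : ℝ → ℝ} {r b m K : ℝ} (hrb : r ≤ b) (hm : 1 ≤ m)
    (hK : 0 ≤ K) (hanti : AntitoneOn ρ (Icc r b)) (hnn : ∀ x ∈ Icc r b, 0 ≤ ρ x)
    (h : K * ∫ x in r..b, (x - r) * ρ x < ∫ x in r..b, ρ x ^ m) :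
    0 < ∫ x in r..b, ρ x ∧ K * ∫ x in r..b, ρ x ≤ 2 * ρ r ^ m := by
  have hmass := integral_rpow_le_rpow_sub_one_mul_integral hrb hm hanti hnn
  have hbath := sq_integral_le_two_mul_integral_sub_mul hrb hanti hnn
  set w := ∫ x in r..b, ρ x
  set g := ∫ x in r..b, (x - r) * ρ x
  have hg : 0 ≤ g := intervalIntegral.integral_nonneg hrb fun x hx =>
    mul_nonneg (sub_nonneg.2 hx.1) (hnn x hx)
  have hρr : 0 ≤ ρ r := hnn r (left_mem_Icc.2 hrb)
  have hw : 0 < w := by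
    refine (intervalIntegral.integral_nonneg hrb hnn).lt_of_ne fun hw => ?_
    rw [show w = 0 from hw.symm, mul_zero] at hmass
    nlinarith [mul_nonneg hK hg]
  refine ⟨hw, le_of_mul_le_mul_right ?_ hw⟩
  have hρm : ρ r ^ m = ρ r ^ (m - 1) * ρ r := by
    rw [← Real.rpow_add_one' hρr (by linarith), sub_add_cancel]
  calc K * w * w = K * w ^ 2 := by ring
    _ ≤ K * (2 * ρ r * g) := by gcongr
    _ = 2 * ρ r * (K * g) := by ring
    _ ≤ 2 * ρ r * (ρ r ^ (m - 1) * w) := by gcongr 2 * ρ r * ?_; linarith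
    _ = 2 * ρ r ^ m * w := by rw [hρm]; ring

theorem mul_le_rpow_of_forall_mul_integral_le {ρ : ℝ → ℝ} {a b b' m K : ℝ} (hab : a ≤ b)
    (hbb' : b ≤ b') (hm : 1 ≤ m) (hK : 0 < K) (hanti : AntitoneOn ρ (Icc a b'))
    (hpos : ∀ s ∈ Icc a b, 0 < ∫ x in s..b', ρ x)
    (hle : ∀ s ∈ Icc a b, K * ∫ x in s..b', ρ x ≤ 2 * ρ s ^ m) :
    (1 - m⁻¹) * K * (b - a) ≤ 4 * ρ a ^ (m - 1) := by
  have hm0 : 0 < m := by linarith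
  have hρpos : ∀ s ∈ Icc a b, 0 < ρ s := fun s hs => by
    have := ((hanti.mono (Icc_subset_Icc_left hs.1)).integral_le_sub_mul
      (hs.2.trans hbb')).trans_lt' (hpos s hs)
    exact pos_of_mul_pos_right this (by linarith [hs.2])
  set M := ρ a
  have hM : 0 < M := hρpos a (left_mem_Icc.2 hab)
  -- the tail mass, rescaled so that `v a ≤ 1` and `M * v s ^ m⁻¹ ≤ ρ s`
  set v : ℝ → ℝ := fun s => K / (2 * M ^ m) * ∫ x in s..b', ρ x
  set c := K / (2 * M ^ (m - 1))
  have hv_pos : ∀ s ∈ Icc a b, 0 < v s := fun s hs => by have := hpos s hs; positivity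
  have hv_cont : ContinuousOn v (Icc a b) := continuousOn_const.mul
    ((hanti.continuousOn_integral_left (hab.trans hbb')).mono (Icc_subset_Icc_right hbb'))
  have hρ_ge : ∀ s ∈ Icc a b, M * v s ^ m⁻¹ ≤ ρ s := fun s hs => by
    have hv := hv_pos s hs
    rw [← Real.rpow_le_rpow_iff (by positivity) (hρpos s hs).le hm0,
      Real.mul_rpow hM.le (by positivity), Real.rpow_inv_rpow hv.le hm0.ne']
    calc M ^ m * v s = K * (∫ x in s..b', ρ x) / 2 := by
          simp only [v]; field_simp
      _ ≤ ρ s ^ m := by linarith [hle s hs]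
  have hstep : ∀ r ∈ Icc a b, ∀ s ∈ Icc a b, r ≤ s → v s + (s - r) * c * v s ^ m⁻¹ ≤ v r := by
    intro r hr s hs hrs
    have hkc : K / (2 * M ^ m) * M = c := by
      simp only [c]; rw [Real.rpow_sub_one hM.ne']; field_simp
    calc v s + (s - r) * c * v s ^ m⁻¹
        = K / (2 * M ^ m) * ((∫ x in s..b', ρ x) + (s - r) * (M * v s ^ m⁻¹)) := by
          rw [← hkc]; ring
      _ ≤ K / (2 * M ^ m) * ((∫ x in s..b', ρ x) + (s - r) * ρ s) := by
          gcongr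
          exact hρ_ge s hs
      _ ≤ v r := mul_le_mul_of_nonneg_left
          (hanti.integral_add_sub_mul_le hr.1 hrs (hs.2.trans hbb')) (by positivity)
  have hva : v a ≤ 1 := by
    have := hle a (left_mem_Icc.2 hab)
    simp only [v]
    rw [div_mul_eq_mul_div, div_le_one (by positivity)]
    linarith
  have hode := le_rpow_of_forall_add_mul_rpow_le hab (by positivity) (inv_nonneg.2 hm0.le)
    (inv_le_one_of_one_le₀ hm) hv_cont hv_pos hstep
  have := (hode.trans (Real.rpow_le_one (hv_pos a (left_mem_Icc.2 hab)).le hva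
    (sub_nonneg.2 (inv_le_one_of_one_le₀ hm))))
  rwa [show (1 - m⁻¹) * c / 2 * (b - a) = (1 - m⁻¹) * K * (b - a) / (4 * M ^ (m - 1)) by
    simp only [c]; field_simp; ring, div_le_one (by positivity)] at this

theorem four_lt_one_sub_inv_mul_max {m : ℝ} (hm : 1 < m) :
    4 < (1 - m⁻¹) * max 10000 (200 * (2 : ℝ) ^ (2 / (m - 1))) := by
  have hm0 : 0 < m := by linarith
  rcases le_or_gt (3 / 2) m with hm' | hm'
  · have : m⁻¹ ≤ 2 / 3 := by rw [inv_le_comm₀ hm0 (by norm_num)]; linarith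
    nlinarith [le_max_left (10000 : ℝ) (200 * (2 : ℝ) ^ (2 / (m - 1)))]
  · have hy : 1 ≤ 2 / (m - 1) := by rw [le_div_iff₀ (by linarith)]; linarith
    have hbern := one_add_mul_self_le_rpow_one_add (s := 1) (by norm_num) hy
    rw [one_add_one_eq_two, mul_one] at hbern
    have key : (1 - m⁻¹) * (1 + 2 / (m - 1)) = 1 + m⁻¹ := by
      field_simp [(by linarith : m - 1 ≠ 0)]; ring
    have : 0 < m⁻¹ := inv_pos.2 hm0
    have h1 : 0 ≤ 1 - m⁻¹ := by rw [sub_nonneg, inv_le_one₀ hm0]; linarith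
    nlinarith [le_max_right (10000 : ℝ) (200 * (2 : ℝ) ^ (2 / (m - 1))),
      mul_le_mul_of_nonneg_left hbern h1]

/-- Lemma of local clustering (Lemma 5.1). -/
theorem stmt_0 (R m : ℝ) (hR : 0 < R) (hm : 1 < m)
    (ρ : ℝ → ℝ)
    (hnn : ∀ x ∈ Icc R (3 * R), 0 ≤ ρ x)
    (hanti : AntitoneOn ρ (Icc R (3 * R))) :
    ∃ r ∈ Icc R (2 * R),
      (∫ x in r..(3 * R), ρ x ^ m) ≤
        (max 10000 (200 * (2 : ℝ) ^ (2 / (m - 1))) / R) * ρ R ^ (m - 1) *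
          ∫ x in r..(3 * R), (x - r) * ρ x := by
  by_contra! hcon
  set C := max 10000 (200 * (2 : ℝ) ^ (2 / (m - 1)))
  have hC : 0 < C := lt_of_lt_of_le (by norm_num) (le_max_left _ _)
  have hK : 0 ≤ C / R * ρ R ^ (m - 1) :=
    mul_nonneg (by positivity) (Real.rpow_nonneg (hnn R ⟨le_rfl, by linarith⟩) _)
  have hprofile : ∀ r ∈ Icc R (2 * R), 0 < ∫ x in r..(3 * R), ρ x ∧
      C / R * ρ R ^ (m - 1) * ∫ x in r..(3 * R), ρ x ≤ 2 * ρ r ^ m := fun r hr =>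
    have hsub : Icc r (3 * R) ⊆ Icc R (3 * R) := Icc_subset_Icc_left hr.1
    mul_integral_le_two_mul_rpow_of_lt (by linarith [hr.2]) hm.le hK
      (hanti.mono hsub) (fun x hx => hnn x (hsub hx)) (hcon r hr)
  have hM : 0 < ρ R := by
    have := (hanti.integral_le_sub_mul (by linarith)).trans_lt'
      (hprofile R ⟨le_rfl, by linarith⟩).1
    exact pos_of_mul_pos_right this (by linarith)
  have hMm : 0 < ρ R ^ (m - 1) := by positivity
  have hrate := mul_le_rpow_of_forall_mul_integral_le (by linarith : R ≤ 2 * R)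
    (by linarith : 2 * R ≤ 3 * R) hm.le (by positivity) hanti (fun s hs => (hprofile s hs).1)
    (fun s hs => (hprofile s hs).2)
  have : (1 - m⁻¹) * C ≤ 4 := by
    rw [show (1 - m⁻¹) * (C / R * ρ R ^ (m - 1)) * (2 * R - R) = (1 - m⁻¹) * C * ρ R ^ (m - 1) by
      field_simp; ring] at hrate
    exact le_of_mul_le_mul_right hrate hMm
  linarith [four_lt_one_sub_inv_mul_max hm]
end

section
/- Let μ : (0,∞) → ℝ be measurable, nonnegative and essentially bounded with M := ess sup μ, and suppose ∫_0^∞ x² μ(x) dx < ∞. Then 9M · (∫_0^∞ x² μ(x) dx)² ≥ 8 · (∫_0^∞ x μ(x) dx)³; equivalently, if M > 0 then ∫_0^∞ x² μ(x) dx ≥ (2^{3/2}/(3 M^{1/2})) · (∫_0^∞ x μ(x) dx)^{3/2}. -/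
/-!
For `R ≥ 0` and `0 ≤ μ ≤ M` on `(0, ∞)`, the pointwise bound `x (R - x) μ(x) ≤ M x (R - x)` on
`(0, R]` (and `≤ 0` beyond `R`) integrates to `R ∫ x μ - ∫ x² μ ≤ M R³ / 6`. Optimizing in `R`,
i.e. taking `R = √(2 ∫ x μ / M)`, gives `8 (∫ x μ)³ ≤ 9 M (∫ x² μ)²`.
-/

open MeasureTheory Set

theorem cube_le_of_forall_mul_le_add {a b c : ℝ} (ha : 0 ≤ a) (hc : 0 ≤ c)
    (h : ∀ R, 0 ≤ R → R * a ≤ b + c * R ^ 3 / 6) : 8 * a ^ 3 ≤ 9 * c * b ^ 2 := by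
  have hb : 0 ≤ b := by simpa using h 0 le_rfl
  rcases ha.eq_or_lt with rfl | ha
  · rw [zero_pow three_ne_zero, mul_zero]
    positivity
  rcases hc.eq_or_lt with rfl | hc
  · have := h ((b + 1) / a) (by positivity)
    rw [div_mul_cancel₀ _ ha.ne'] at this
    linarith
  set R := √(2 * a / c)
  have hR2 : R ^ 2 = 2 * a / c := Real.sq_sqrt (by positivity)
  have hRa : 2 * (R * a) ≤ 3 * b := by
    have hcR : c * R ^ 3 = 2 * (R * a) := by rw [pow_succ, hR2]; field_simp
    linarith [h R (Real.sqrt_nonneg _)]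
  have ha3 : 8 * a ^ 3 = c * (2 * (R * a)) ^ 2 := by rw [mul_pow, mul_pow, hR2]; field_simp; ring
  rw [ha3]
  nlinarith [mul_le_mul_of_nonneg_left (pow_le_pow_left₀ (by positivity) hRa 2) hc.le]

theorem integrableOn_indicator_Ioc_mul_mul_sub (M R : ℝ) :
    IntegrableOn ((Ioc 0 R).indicator fun x => M * (x * (R - x))) (Ioi 0) :=
  ((Continuous.integrableOn_Ioc (by fun_prop)).integrable_indicator measurableSet_Ioc).integrableOn

theorem integral_indicator_Ioc_mul_mul_sub (M : ℝ) {R : ℝ} (hR : 0 ≤ R) :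
    ∫ x in Ioi 0, (Ioc 0 R).indicator (fun x => M * (x * (R - x))) x = M * R ^ 3 / 6 := by
  rw [setIntegral_indicator measurableSet_Ioc, inter_eq_right.2 Ioc_subset_Ioi_self,
    ← intervalIntegral.integral_of_le hR]
  have hsplit : (fun x : ℝ => M * (x * (R - x))) = fun x => M * R * x - M * x ^ 2 := by
    ext x; ring
  rw [hsplit, intervalIntegral.integral_sub
    ((continuous_const_mul _).intervalIntegrable _ _)
    (Continuous.intervalIntegrable (by fun_prop) _ _),
    intervalIntegral.integral_const_mul, intervalIntegral.integral_const_mul, integral_id,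
    integral_pow]
  ring

section

variable {f : ℝ → ℝ} {M : ℝ}

theorem ae_mul_mul_le_sq_mul_add_indicator (hf0 : ∀ᵐ x ∂volume.restrict (Ioi 0), 0 ≤ f x)
    (hfM : ∀ᵐ x ∂volume.restrict (Ioi 0), f x ≤ M) (R : ℝ) :
    ∀ᵐ x ∂volume.restrict (Ioi 0),
      R * (x * f x) ≤ x ^ 2 * f x + (Ioc 0 R).indicator (fun x => M * (x * (R - x))) x := by
  filter_upwards [hf0, hfM, ae_restrict_mem measurableSet_Ioi] with x h0 hM (hx : 0 < x)
  by_cases hxR : x ≤ R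
  · rw [indicator_of_mem (mem_Ioc.2 ⟨hx, hxR⟩)]
    nlinarith [mul_nonneg (mul_nonneg hx.le (sub_nonneg.2 hxR)) (sub_nonneg.2 hM)]
  · rw [indicator_of_notMem fun h => hxR h.2]
    nlinarith [mul_nonneg (mul_nonneg hx.le h0) (sub_nonneg.2 (not_le.1 hxR).le)]

theorem integrableOn_mul_of_integrableOn_sq_mul (hf0 : ∀ᵐ x ∂volume.restrict (Ioi 0), 0 ≤ f x)
    (hfM : ∀ᵐ x ∂volume.restrict (Ioi 0), f x ≤ M)
    (h2 : IntegrableOn (fun x => x ^ 2 * f x) (Ioi 0)) :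
    IntegrableOn (fun x => x * f x) (Ioi 0) := by
  have hmeas : AEStronglyMeasurable (fun x => x * f x) (volume.restrict (Ioi 0)) := by
    refine (measurable_inv.aestronglyMeasurable.mul h2.1).congr ?_
    filter_upwards [ae_restrict_mem measurableSet_Ioi] with x (hx : 0 < x)
    simp only [Pi.mul_apply]
    field_simp
  -- the case `R = 1` of the pointwise bound dominates `x f x`
  refine Integrable.mono' (h2.add (integrableOn_indicator_Ioc_mul_mul_sub M 1)) hmeas ?_
  filter_upwards [hf0, ae_mul_mul_le_sq_mul_add_indicator hf0 hfM 1,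
    ae_restrict_mem measurableSet_Ioi] with x h0 h (hx : 0 < x)
  rw [Real.norm_of_nonneg (mul_nonneg hx.le h0)]
  simpa using h

theorem mul_integral_mul_le_integral_sq_mul_add (hf0 : ∀ᵐ x ∂volume.restrict (Ioi 0), 0 ≤ f x)
    (hfM : ∀ᵐ x ∂volume.restrict (Ioi 0), f x ≤ M)
    (h2 : IntegrableOn (fun x => x ^ 2 * f x) (Ioi 0)) {R : ℝ} (hR : 0 ≤ R) :
    R * ∫ x in Ioi 0, x * f x ≤ (∫ x in Ioi 0, x ^ 2 * f x) + M * R ^ 3 / 6 := by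
  rw [← integral_indicator_Ioc_mul_mul_sub M hR, ← integral_const_mul, ← integral_add h2
    (integrableOn_indicator_Ioc_mul_mul_sub M R)]
  exact integral_mono_ae ((integrableOn_mul_of_integrableOn_sq_mul hf0 hfM h2).const_mul R)
    (h2.add (integrableOn_indicator_Ioc_mul_mul_sub M R))
    (ae_mul_mul_le_sq_mul_add_indicator hf0 hfM R)

end

theorem stmt_2_general (μ : ℝ → ℝ)
    (hnn : ∀ x ∈ Ioi (0:ℝ), 0 ≤ μ x)
    (hbdd : Filter.IsBoundedUnder (· ≤ ·) (ae (volume.restrict (Ioi (0:ℝ)))) μ)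
    (hint2 : IntegrableOn (fun x => x ^ 2 * μ x) (Ioi 0)) :
    8 * (∫ x in Ioi (0:ℝ), x * μ x) ^ 3 ≤
      9 * essSup μ (volume.restrict (Ioi (0:ℝ))) *
        (∫ x in Ioi (0:ℝ), x ^ 2 * μ x) ^ 2 := by
  have hle : ∀ᵐ x ∂volume.restrict (Ioi 0), μ x ≤ essSup μ (volume.restrict (Ioi 0)) :=
    ae_le_essSup hbdd
  have hnn' : ∀ᵐ x ∂volume.restrict (Ioi 0), 0 ≤ μ x :=
    ae_restrict_of_forall_mem measurableSet_Ioi hnn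
  have hM : 0 ≤ essSup μ (volume.restrict (Ioi 0)) := by
    have : (ae (volume.restrict (Ioi (0:ℝ)))).NeBot :=
      ae_neBot.2 (by simp [Measure.restrict_eq_zero])
    obtain ⟨x, hxM, hx0⟩ := (hle.and hnn').exists
    exact hx0.trans hxM
  exact cube_le_of_forall_mul_le_add
    (setIntegral_nonneg measurableSet_Ioi fun x hx => mul_nonneg hx.le (hnn x hx)) hM
    fun R hR => mul_integral_mul_le_integral_sq_mul_add hnn' hle hint2 hR

/-- Lemma 6.8 (ii): second moment vs first moment for a bounded density. -/
theorem stmt_2 (μ : ℝ → ℝ)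
    (hmeas : Measurable μ)
    (hnn : ∀ x ∈ Ioi (0:ℝ), 0 ≤ μ x)
    (hbdd : Filter.IsBoundedUnder (· ≤ ·) (ae (volume.restrict (Ioi (0:ℝ)))) μ)
    (hint2 : IntegrableOn (fun x => x ^ 2 * μ x) (Ioi 0)) :
    8 * (∫ x in Ioi (0:ℝ), x * μ x) ^ 3 ≤
      9 * essSup μ (volume.restrict (Ioi (0:ℝ))) *
        (∫ x in Ioi (0:ℝ), x ^ 2 * μ x) ^ 2 :=
  stmt_2_general μ hnn hbdd hint2
end

section
/- Let C : [0,∞) → 𝒫(ℝ) be admissible and assume the set {(x,h) ∈ ℝ × [0,∞) : x ∈ C(h)} is Lebesgue-measurable in ℝ². Then for almost every h ∈ [0,∞), the set C(h) \ C[ρ[C]](h) has Lebesgue measure zero; that is, the layer-cake reconstruction recovers the original super-level sets up to a measure-zero set for almost every level h. -/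
open MeasureTheory Set
open scoped ENNReal

/-- Proposition 4.1, second part: for a.e. level `h`, `C(h) \ C[ρ[C]](h)` is null. -/
theorem stmt_4 (C : ℝ → Set ℝ)
    (hadm : ∀ h₁ h₂ : ℝ, 0 ≤ h₁ → h₁ ≤ h₂ → C h₂ ⊆ C h₁)
    (hmeas : MeasurableSet {p : ℝ × ℝ | 0 ≤ p.2 ∧ p.1 ∈ C p.2}) :
    ∀ᵐ h ∂(volume.restrict (Ici (0:ℝ))),
      volume (C h \
        {x : ℝ | ENNReal.ofReal h < volume {h' : ℝ | 0 ≤ h' ∧ x ∈ C h'}}) = 0 := by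
  set ρ : ℝ → ℝ≥0∞ := fun x => volume {h' : ℝ | 0 ≤ h' ∧ x ∈ C h'} with hρdef
  set ν : Measure ℝ := volume.restrict (Ici (0:ℝ)) with hνdef
  have hρmeas : Measurable ρ := by
    have := measurable_measure_prodMk_left (ν := (volume : Measure ℝ)) hmeas
    exact this
  -- the "level set" in the product space
  set T : Set (ℝ × ℝ) := {p : ℝ × ℝ | ρ p.1 = ENNReal.ofReal p.2} with hTdef
  have hTmeas : MeasurableSet T := by
    have h1 : MeasurableSet {p : ℝ × ℝ | ρ p.1 ≤ ENNReal.ofReal p.2} :=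
      measurableSet_le (hρmeas.comp measurable_fst)
        (ENNReal.measurable_ofReal.comp measurable_snd)
    have h2 : MeasurableSet {p : ℝ × ℝ | ENNReal.ofReal p.2 ≤ ρ p.1} :=
      measurableSet_le (ENNReal.measurable_ofReal.comp measurable_snd)
        (hρmeas.comp measurable_fst)
    have : T = {p : ℝ × ℝ | ρ p.1 ≤ ENNReal.ofReal p.2} ∩
        {p : ℝ × ℝ | ENNReal.ofReal p.2 ≤ ρ p.1} := by
      ext p; simp [hTdef, le_antisymm_iff]
    rw [this]; exact h1.inter h2
  have hT0 : (volume.prod ν) T = 0 := by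
    rw [Measure.prod_apply hTmeas]
    have : ∀ x : ℝ, ν (Prod.mk x ⁻¹' T) = 0 := by
      intro x
      rw [hνdef, Measure.restrict_apply' measurableSet_Ici]
      refine measure_mono_null ?_ (measure_singleton ((ρ x).toReal))
      rintro h ⟨hh, hh0⟩
      have : ENNReal.ofReal h = ρ x := (hh).symm
      have := congrArg ENNReal.toReal this
      rw [ENNReal.toReal_ofReal hh0] at this
      simp [this]
    simp [this]
  have hsec : ∀ᵐ h ∂ν, volume ((fun x => (x, h)) ⁻¹' T) = 0 := by
    have heq : (volume.prod ν) T = ∫⁻ h, volume ((fun x => (x, h)) ⁻¹' T) ∂ν :=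
      Measure.prod_apply_symm hTmeas
    rw [hT0] at heq
    exact (lintegral_eq_zero_iff (measurable_measure_prodMk_right hTmeas)).mp heq.symm
  filter_upwards [hsec, ae_restrict_mem measurableSet_Ici] with h hsec0 hh0
  refine measure_mono_null ?_ hsec0
  rintro x ⟨hxC, hxnot⟩
  have hle : ρ x ≤ ENNReal.ofReal h := not_lt.mp hxnot
  have hge : ENNReal.ofReal h ≤ ρ x := by
    have hsub : Icc (0:ℝ) h ⊆ {h' : ℝ | 0 ≤ h' ∧ x ∈ C h'} := by
      rintro h' ⟨h'0, h'h⟩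
      exact ⟨h'0, hadm h' h h'0 h'h hxC⟩
    calc ENNReal.ofReal h = volume (Icc (0:ℝ) h) := by
          rw [Real.volume_Icc, sub_zero]
      _ ≤ ρ x := measure_mono hsub
  show (x, h) ∈ T
  exact le_antisymm hle hge
end

section
/- Let C : [0,∞) → 𝒫(ℝ) be such that {(x,h) ∈ ℝ × [0,∞) : x ∈ C(h)} is Lebesgue-measurable, each C(h) has finite Lebesgue measure, and ρ[C](x) < ∞ for almost every x. Let Φ : [0,∞) → ℝ be differentiable and convex with Φ(0) = 0 and Φ' ≥ 0, and assume h ↦ Φ'(h)·|C(h)| is Lebesgue integrable on (0,∞). Then ∫_ℝ Φ(ρ[C](x)) dx ≤ ∫_0^∞ Φ'(h) |C(h)| dh. -/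
open MeasureTheory Set
open scoped ENNReal

/-!
Write `ρ(x) = |S_x|` with `S_x = {h ≥ 0 : x ∈ C h}`. Convexity makes `Φ'` nondecreasing, so
`Φ(|S|) = ∫₀^|S| Φ' ≤ ∫_S Φ'` for every `S ⊆ [0, ∞)`: among sets of measure `|S|`, the interval
`[0, |S|)` is where `Φ'` is smallest. Integrating in `x` and exchanging the integrals (Tonelli on
`{(x, h) : h ≥ 0, x ∈ C h}`) turns the right-hand side into `∫₀^∞ Φ'(h) |C h| dh`.
-/

theorem ofReal_integral_le_lintegral_ofReal {α : Type*} [MeasurableSpace α] {μ : Measure α}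
    (f : α → ℝ) : ENNReal.ofReal (∫ x, f x ∂μ) ≤ ∫⁻ x, ENNReal.ofReal (f x) ∂μ := by
  by_cases hf : Integrable f μ
  · rw [integral_eq_lintegral_pos_part_sub_lintegral_neg_part hf]
    exact (ENNReal.ofReal_le_ofReal (sub_le_self _ ENNReal.toReal_nonneg)).trans
      ENNReal.ofReal_toReal_le
  · simp [integral_undef hf]

theorem lintegral_setLIntegral_preimage_prodMk_left {α β : Type*} [MeasurableSpace α]
    [MeasurableSpace β] {μ : Measure α} {ν : Measure β} [SFinite μ] [SFinite ν]
    {E : Set (α × β)} (hE : MeasurableSet E) {g : β → ℝ≥0∞} (hg : Measurable g) :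
    ∫⁻ x, ∫⁻ y in Prod.mk x ⁻¹' E, g y ∂ν ∂μ = ∫⁻ y, g y * μ ((·, y) ⁻¹' E) ∂ν := by
  calc ∫⁻ x, ∫⁻ y in Prod.mk x ⁻¹' E, g y ∂ν ∂μ
      = ∫⁻ x, ν.withDensity g (Prod.mk x ⁻¹' E) ∂μ := by
        simp_rw [withDensity_apply _ (measurable_prodMk_left hE)]
    _ = μ.prod (ν.withDensity g) E := (Measure.prod_apply hE).symm
    _ = ∫⁻ y, μ ((·, y) ⁻¹' E) ∂ν.withDensity g := Measure.prod_apply_symm hE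
    _ = ∫⁻ y, g y * μ ((·, y) ⁻¹' E) ∂ν :=
        lintegral_withDensity_eq_lintegral_mul _ hg (measurable_measure_prodMk_right hE)

theorem ConvexOn.monotoneOn_of_hasDerivWithinAt {S : Set ℝ} {Φ Φ' : ℝ → ℝ}
    (hconv : ConvexOn ℝ S Φ) (hderiv : ∀ x ∈ S, HasDerivWithinAt Φ (Φ' x) S x) :
    MonotoneOn Φ' S := by
  intro a ha b hb hab
  rcases hab.eq_or_lt with rfl | hlt
  · exact le_rfl
  · exact (hconv.le_slope_of_hasDerivWithinAt ha hb hlt (hderiv a ha)).trans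
      (hconv.slope_le_of_hasDerivWithinAt ha hb hlt (hderiv b hb))

theorem ofReal_sub_eq_setLIntegral_Ico_of_hasDerivWithinAt {Φ Φ' : ℝ → ℝ} {a b : ℝ}
    (hab : a ≤ b) (hderiv : ∀ x ∈ Icc a b, HasDerivWithinAt Φ (Φ' x) (Icc a b) x)
    (hint : IntervalIntegrable Φ' volume a b) (hnn : ∀ x ∈ Icc a b, 0 ≤ Φ' x) :
    ENNReal.ofReal (Φ b - Φ a) = ∫⁻ t in Ico a b, ENNReal.ofReal (Φ' t) := by
  have hftc : ∫ t in a..b, Φ' t = Φ b - Φ a :=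
    intervalIntegral.integral_eq_sub_of_hasDerivAt_of_le hab
      (fun x hx => (hderiv x hx).continuousWithinAt)
      (fun x hx => (hderiv x (Ioo_subset_Icc_self hx)).hasDerivAt (Icc_mem_nhds hx.1 hx.2)) hint
  rw [← hftc, intervalIntegral.integral_of_le hab,
    ofReal_integral_eq_lintegral_ofReal hint.1
      ((ae_restrict_iff' measurableSet_Ioc).mpr
        (.of_forall fun t ht => hnn t (Ioc_subset_Icc_self ht)))]
  exact setLIntegral_congr (Ioc_ae_eq_Icc.trans Ico_ae_eq_Icc.symm)

/-- The bathtub principle for a density that is nondecreasing on `[0, ∞)`. -/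
theorem setLIntegral_Ico_le_setLIntegral_of_monotoneOn {g : ℝ → ℝ≥0∞}
    (hg : MonotoneOn g (Ici 0)) {S : Set ℝ} (hS : MeasurableSet S) (hS0 : S ⊆ Ici 0) :
    ∫⁻ t in Ico 0 (volume S).toReal, g t ≤ ∫⁻ t in S, g t := by
  by_cases hSfin : volume S = ⊤
  · simp [hSfin]
  set r := (volume S).toReal
  set A := Ico 0 r
  have hr : 0 ≤ r := ENNReal.toReal_nonneg
  have hA : MeasurableSet A := measurableSet_Ico
  have hvolA : volume A = volume S := by
    rw [Real.volume_Ico, sub_zero, ENNReal.ofReal_toReal hSfin]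
  have hdiff : volume (A \ S) = volume (S \ A) :=
    measure_sdiff_symm hA.nullMeasurableSet hS.nullMeasurableSet hvolA
      (measure_ne_top_of_subset inter_subset_right hSfin)
  have hAS : ∫⁻ t in A \ S, g t ≤ g r * volume (A \ S) := by
    rw [← setLIntegral_const]
    exact setLIntegral_mono' (hA.diff hS) fun t ht => hg ht.1.1 hr ht.1.2.le
  have hSA : g r * volume (S \ A) ≤ ∫⁻ t in S \ A, g t := by
    rw [← setLIntegral_const]
    exact setLIntegral_mono' (hS.diff hA) fun t ht =>
      hg hr (hS0 ht.1) (not_lt.mp fun hlt => ht.2 ⟨hS0 ht.1, hlt⟩)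
  calc ∫⁻ t in A, g t = (∫⁻ t in A ∩ S, g t) + ∫⁻ t in A \ S, g t :=
        (lintegral_inter_add_sdiff g A hS).symm
    _ ≤ (∫⁻ t in S ∩ A, g t) + ∫⁻ t in S \ A, g t := by
        rw [inter_comm]
        exact add_le_add le_rfl (hAS.trans (hdiff ▸ hSA))
    _ = ∫⁻ t in S, g t := lintegral_inter_add_sdiff g S hA

theorem ofReal_volume_toReal_le_setLIntegral_deriv {Φ Φ' : ℝ → ℝ}
    (hderiv : ∀ x ∈ Ici (0 : ℝ), HasDerivWithinAt Φ (Φ' x) (Ici 0) x)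
    (hmono : MonotoneOn Φ' (Ici 0)) (hnn : ∀ x ∈ Ici (0 : ℝ), 0 ≤ Φ' x) (hΦ0 : Φ 0 = 0)
    {S : Set ℝ} (hS : MeasurableSet S) (hS0 : S ⊆ Ici 0) :
    ENNReal.ofReal (Φ (volume S).toReal) ≤ ∫⁻ t in S, ENNReal.ofReal (Φ' t) := by
  have hr : 0 ≤ (volume S).toReal := ENNReal.toReal_nonneg
  calc ENNReal.ofReal (Φ (volume S).toReal)
      = ENNReal.ofReal (Φ (volume S).toReal - Φ 0) := by rw [hΦ0, sub_zero]
    _ = ∫⁻ t in Ico 0 (volume S).toReal, ENNReal.ofReal (Φ' t) :=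
        ofReal_sub_eq_setLIntegral_Ico_of_hasDerivWithinAt hr
          (fun x hx => (hderiv x hx.1).mono Icc_subset_Ici_self)
          (hmono.mono ((uIcc_of_le hr).subset.trans Icc_subset_Ici_self)).intervalIntegrable
          (fun x hx => hnn x hx.1)
    _ ≤ ∫⁻ t in S, ENNReal.ofReal (Φ' t) :=
        setLIntegral_Ico_le_setLIntegral_of_monotoneOn
          (fun a ha b hb hab => ENNReal.ofReal_le_ofReal (hmono ha hb hab)) hS hS0

theorem lintegral_mul_measure_preimage_prodMk_right_layers {α : Type*} [MeasurableSpace α]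
    (μ : Measure α) (C : ℝ → Set α) (g : ℝ → ℝ≥0∞) :
    ∫⁻ t, g t * μ ((·, t) ⁻¹' {p : α × ℝ | 0 ≤ p.2 ∧ p.1 ∈ C p.2}) =
      ∫⁻ t in Ioi 0, g t * μ (C t) := by
  calc ∫⁻ t, g t * μ ((·, t) ⁻¹' {p : α × ℝ | 0 ≤ p.2 ∧ p.1 ∈ C p.2})
      = ∫⁻ t in Ici 0, g t * μ ((·, t) ⁻¹' {p : α × ℝ | 0 ≤ p.2 ∧ p.1 ∈ C p.2}) := by
        refine (setLIntegral_eq_of_support_subset fun t ht => ?_).symm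
        by_contra hneg
        exact ht (by simp [show ¬ 0 ≤ t from hneg])
    _ = ∫⁻ t in Ioi 0, g t * μ ((·, t) ⁻¹' {p : α × ℝ | 0 ≤ p.2 ∧ p.1 ∈ C p.2}) :=
        setLIntegral_congr Ioi_ae_eq_Ici.symm
    _ = ∫⁻ t in Ioi 0, g t * μ (C t) :=
        setLIntegral_congr_fun measurableSet_Ioi fun t ht => by
          simp [(mem_Ioi.mp ht).le]

theorem stmt_5_general (C : ℝ → Set ℝ)
    (hmeas : MeasurableSet {p : ℝ × ℝ | 0 ≤ p.2 ∧ p.1 ∈ C p.2})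
    (hfin : ∀ h : ℝ, volume (C h) < ⊤)
    (Φ Φ' : ℝ → ℝ)
    (hΦdiff : ∀ x ∈ Ici (0:ℝ), HasDerivWithinAt Φ (Φ' x) (Ici 0) x)
    (hΦconv : ConvexOn ℝ (Ici 0) Φ)
    (hΦ0 : Φ 0 = 0)
    (hΦ'nn : ∀ x ∈ Ici (0:ℝ), 0 ≤ Φ' x)
    (hint : IntegrableOn (fun h => Φ' h * (volume (C h)).toReal) (Ioi 0)) :
    (∫ x : ℝ, Φ ((volume {h : ℝ | 0 ≤ h ∧ x ∈ C h}).toReal)) ≤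
      ∫ h in Ioi (0:ℝ), Φ' h * (volume (C h)).toReal := by
  have hmono : MonotoneOn Φ' (Ici 0) := hΦconv.monotoneOn_of_hasDerivWithinAt hΦdiff
  -- a globally monotone, hence measurable, extension of `Φ'` from `[0, ∞)`
  set ψ : ℝ → ℝ := fun t => Φ' (max t 0)
  have hψ : Monotone ψ := fun a b hab =>
    hmono (le_max_right a 0) (le_max_right b 0) (max_le_max_right 0 hab)
  have hψΦ' : EqOn ψ Φ' (Ici 0) := fun t ht => congrArg Φ' (max_eq_left ht)
  have hintegrand_nn : ∀ t ∈ Ioi (0 : ℝ), 0 ≤ Φ' t * (volume (C t)).toReal := fun t ht =>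
    mul_nonneg (hΦ'nn t (mem_Ioi.mp ht).le) ENNReal.toReal_nonneg
  have hRHS : ENNReal.ofReal (∫ h in Ioi (0:ℝ), Φ' h * (volume (C h)).toReal) =
      ∫⁻ t in Ioi 0, ENNReal.ofReal (ψ t) * volume (C t) := by
    rw [ofReal_integral_eq_lintegral_ofReal hint
      ((ae_restrict_iff' measurableSet_Ioi).mpr (.of_forall hintegrand_nn))]
    refine setLIntegral_congr_fun measurableSet_Ioi fun t ht => ?_
    rw [ENNReal.ofReal_mul (hΦ'nn t (mem_Ioi.mp ht).le), ENNReal.ofReal_toReal (hfin t).ne,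
      hψΦ' (mem_Ioi.mp ht).le]
  rw [← ENNReal.ofReal_le_ofReal_iff (setIntegral_nonneg measurableSet_Ioi hintegrand_nn), hRHS,
    ← lintegral_mul_measure_preimage_prodMk_right_layers,
    ← lintegral_setLIntegral_preimage_prodMk_left hmeas (g := fun t => ENNReal.ofReal (ψ t))
      (ENNReal.measurable_ofReal.comp hψ.measurable)]
  refine (ofReal_integral_le_lintegral_ofReal _).trans (lintegral_mono fun x => ?_)
  rw [setLIntegral_congr_fun (measurable_prodMk_left hmeas) fun t ht => by rw [hψΦ' ht.1]]
  exact ofReal_volume_toReal_le_setLIntegral_deriv hΦdiff hmono hΦ'nn hΦ0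
    (measurable_prodMk_left hmeas) fun t ht => ht.1

/-- Lemma 4.2 (inequality part): layer-cake bound on the internal energy. -/
theorem stmt_5 (C : ℝ → Set ℝ)
    (hmeas : MeasurableSet {p : ℝ × ℝ | 0 ≤ p.2 ∧ p.1 ∈ C p.2})
    (hfin : ∀ h : ℝ, volume (C h) < ⊤)
    (hρfin : ∀ᵐ x : ℝ, volume {h : ℝ | 0 ≤ h ∧ x ∈ C h} ≠ ⊤)
    (Φ Φ' : ℝ → ℝ)
    (hΦdiff : ∀ x ∈ Ici (0:ℝ), HasDerivWithinAt Φ (Φ' x) (Ici 0) x)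
    (hΦconv : ConvexOn ℝ (Ici 0) Φ)
    (hΦ0 : Φ 0 = 0)
    (hΦ'nn : ∀ x ∈ Ici (0:ℝ), 0 ≤ Φ' x)
    (hint : IntegrableOn (fun h => Φ' h * (volume (C h)).toReal) (Ioi 0)) :
    (∫ x : ℝ, Φ ((volume {h : ℝ | 0 ≤ h ∧ x ∈ C h}).toReal)) ≤
      ∫ h in Ioi (0:ℝ), Φ' h * (volume (C h)).toReal :=
  stmt_5_general C hmeas hfin Φ Φ' hΦdiff hΦconv hΦ0 hΦ'nn hint
end

section
/- Let C : [0,∞) → 𝒫(ℝ) be admissible, with {(x,h) ∈ ℝ × [0,∞) : x ∈ C(h)} Lebesgue-measurable, each C(h) of finite Lebesgue measure, and ρ[C](x) < ∞ for almost every x. Let Φ : [0,∞) → ℝ be differentiable and convex with Φ(0) = 0 and Φ' ≥ 0, and assume h ↦ Φ'(h)·|C(h)| is Lebesgue integrable on (0,∞). Then equality holds in the layer-cake bound: ∫_ℝ Φ(ρ[C](x)) dx = ∫_0^∞ Φ'(h) |C(h)| dh. -/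
/-!
By admissibility, for almost every `x` the section `{h ≥ 0 | x ∈ C h}` coincides up to a null
set with the interval `[0, ρ(x)]`, so `Φ (ρ x) = ∫_{section} Φ'` by the fundamental theorem of
calculus (`Φ'` is monotone by convexity, hence locally integrable). Integrating in `x` and
exchanging the order of integration over the subgraph `{(x, h) | x ∈ C h}` (Tonelli) turns
`∫ Φ (ρ x) dx` into `∫ Φ' h * |C h| dh`. The identity is proved for lower Lebesgue integrals of
nonnegative functions and then read off for the Bochner integrals.
-/

open MeasureTheory Set
open scoped ENNReal

theorem ConvexOn.monotoneOn_of_hasDerivWithinAt_s6 {S : Set ℝ} {f f' : ℝ → ℝ}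
    (hfc : ConvexOn ℝ S f) (hf : ∀ x ∈ S, HasDerivWithinAt f (f' x) S x) :
    MonotoneOn f' S := by
  intro x hx y hy hxy
  rcases eq_or_lt_of_le hxy with rfl | hxy
  · rfl
  exact (hfc.le_slope_of_hasDerivWithinAt hx hy hxy (hf x hx)).trans
    (hfc.slope_le_of_hasDerivWithinAt hx hy hxy (hf y hy))

theorem MonotoneOn.integral_eq_sub_of_hasDerivWithinAt {f f' : ℝ → ℝ} {a b : ℝ}
    (hf' : MonotoneOn f' (Icc a b)) (hab : a ≤ b)
    (hf : ∀ x ∈ Icc a b, HasDerivWithinAt f (f' x) (Icc a b) x) :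
    ∫ x in a..b, f' x = f b - f a :=
  intervalIntegral.integral_eq_sub_of_hasDeriv_right_of_le hab
    (fun x hx => (hf x hx).continuousWithinAt)
    (fun x hx => (hf x (Ioo_subset_Icc_self hx)).mono_of_mem_nhdsWithin
      (Icc_mem_nhdsGT_of_mem (Ioo_subset_Ico_self hx)))
    (MonotoneOn.intervalIntegrable (by rwa [uIcc_of_le hab]))

theorem MonotoneOn.setLIntegral_Icc_ofReal_eq_sub {f f' : ℝ → ℝ} {a b : ℝ}
    (hf' : MonotoneOn f' (Icc a b)) (hab : a ≤ b)
    (hf : ∀ x ∈ Icc a b, HasDerivWithinAt f (f' x) (Icc a b) x)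
    (hf'_nonneg : ∀ x ∈ Icc a b, 0 ≤ f' x) :
    ∫⁻ x in Icc a b, ENNReal.ofReal (f' x) = ENNReal.ofReal (f b - f a) := by
  rw [← hf'.integral_eq_sub_of_hasDerivWithinAt hab hf, intervalIntegral.integral_of_le hab,
    ← integral_Icc_eq_integral_Ioc, ofReal_integral_eq_lintegral_ofReal
      (hf'.integrableOn_isCompact isCompact_Icc)
      ((ae_restrict_iff' measurableSet_Icc).2 (ae_of_all _ hf'_nonneg))]

theorem ae_eq_Icc_zero_toReal_volume {T : Set ℝ} (hT : T ⊆ Ici 0)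
    (hdown : ∀ t ∈ T, Icc 0 t ⊆ T) (hfin : volume T ≠ ∞) :
    T =ᵐ[volume] Icc 0 (volume T).toReal := by
  have hle : T ⊆ Icc 0 (volume T).toReal := fun t ht => by
    refine ⟨hT ht, ?_⟩
    have := measure_mono (μ := volume) (hdown t ht)
    rw [Real.volume_Icc, sub_zero] at this
    exact (ENNReal.ofReal_le_iff_le_toReal hfin).1 this
  have hge : Ico 0 (volume T).toReal ⊆ T := fun s hs => by
    by_contra hsT
    have hTs : T ⊆ Ico 0 s := fun t ht =>
      ⟨hT ht, lt_of_not_ge fun hst => hsT (hdown t ht ⟨hs.1, hst⟩)⟩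
    have := ENNReal.toReal_mono (by simp) (measure_mono (μ := volume) hTs)
    rw [Real.volume_Ico, sub_zero, ENNReal.toReal_ofReal hs.1] at this
    exact this.not_gt hs.2
  exact hle.eventuallyLE.antisymm (Ico_ae_eq_Icc.symm.le.trans hge.eventuallyLE)

theorem lintegral_setLIntegral_prodMk_preimage {α β : Type*} [MeasurableSpace α]
    [MeasurableSpace β] {μ : Measure α} {ν : Measure β} [SFinite μ] [SFinite ν]
    {S : Set (α × β)} (hS : MeasurableSet S) {g : β → ℝ≥0∞} (hg : Measurable g) :
    ∫⁻ x, ∫⁻ y in Prod.mk x ⁻¹' S, g y ∂ν ∂μ = ∫⁻ y, g y * μ ((·, y) ⁻¹' S) ∂ν := by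
  have hF : Measurable (S.indicator fun p : α × β => g p.2) :=
    (hg.comp measurable_snd).indicator hS
  calc ∫⁻ x, ∫⁻ y in Prod.mk x ⁻¹' S, g y ∂ν ∂μ
      = ∫⁻ x, ∫⁻ y, S.indicator (fun p => g p.2) (x, y) ∂ν ∂μ := by
        congr with x
        rw [← lintegral_indicator (hS.preimage measurable_prodMk_left)]
        rfl
    _ = ∫⁻ y, ∫⁻ x, S.indicator (fun p => g p.2) (x, y) ∂μ ∂ν :=
        lintegral_lintegral_swap hF.aemeasurable
    _ = ∫⁻ y, g y * μ ((·, y) ⁻¹' S) ∂ν := by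
        congr with y
        rw [← lintegral_indicator_const (hS.preimage measurable_prodMk_right)]
        rfl

theorem ContinuousOn.measurable_comp {α β γ : Type*} [MeasurableSpace α] [TopologicalSpace β]
    [MeasurableSpace β] [OpensMeasurableSpace β] [TopologicalSpace γ] [MeasurableSpace γ]
    [BorelSpace γ] {f : β → γ} {s : Set β} (hf : ContinuousOn f s) {g : α → β}
    (hg : Measurable g) (hgs : ∀ x, g x ∈ s) : Measurable (f ∘ g) :=
  hf.domRestrict.measurable.comp (hg.subtype_mk (h := hgs))

theorem lintegral_ofReal_comp_volume_sections_eq {C : ℝ → Set ℝ}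
    (hadm : ∀ h₁ h₂ : ℝ, 0 ≤ h₁ → h₁ ≤ h₂ → C h₂ ⊆ C h₁)
    (hmeas : MeasurableSet {p : ℝ × ℝ | 0 ≤ p.2 ∧ p.1 ∈ C p.2})
    (hfin : ∀ h : ℝ, volume (C h) < ⊤)
    (hρfin : ∀ᵐ x : ℝ, volume {h : ℝ | 0 ≤ h ∧ x ∈ C h} ≠ ⊤)
    {Φ Φ' : ℝ → ℝ} (hΦ : ∀ x ∈ Ici (0:ℝ), HasDerivWithinAt Φ (Φ' x) (Ici 0) x)
    (hΦ' : MonotoneOn Φ' (Ici 0)) (hΦ'_nonneg : ∀ x ∈ Ici (0:ℝ), 0 ≤ Φ' x) (hΦ0 : Φ 0 = 0) :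
    ∫⁻ x, ENNReal.ofReal (Φ (volume {h : ℝ | 0 ≤ h ∧ x ∈ C h}).toReal) =
      ∫⁻ h in Ioi 0, ENNReal.ofReal (Φ' h * (volume (C h)).toReal) := by
  set S := {p : ℝ × ℝ | 0 ≤ p.2 ∧ p.1 ∈ C p.2}
  -- a measurable extension of `Φ'` from `[0, ∞)`, so that Tonelli applies
  set ψ : ℝ → ℝ := fun h => Φ' (max h 0)
  have hψ : Measurable ψ := Monotone.measurable fun a b hab =>
    hΦ' (le_max_right a 0) (le_max_right b 0) (max_le_max_right 0 hab)
  have hψΦ' : EqOn ψ Φ' (Ici 0) := fun h hh => by simp only [ψ, max_eq_left (mem_Ici.1 hh)]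
  have hsection : ∀ᵐ x, ∫⁻ h in Prod.mk x ⁻¹' S, ENNReal.ofReal (ψ h) =
      ENNReal.ofReal (Φ (volume {h : ℝ | 0 ≤ h ∧ x ∈ C h}).toReal) := by
    filter_upwards [hρfin] with x hx
    have hT : MeasurableSet {h | 0 ≤ h ∧ x ∈ C h} := hmeas.preimage measurable_prodMk_left
    change ∫⁻ h in {h | 0 ≤ h ∧ x ∈ C h}, _ = _
    rw [setLIntegral_congr_fun hT fun h hh => congrArg ENNReal.ofReal (hψΦ' hh.1),
      setLIntegral_congr (ae_eq_Icc_zero_toReal_volume (T := {h | 0 ≤ h ∧ x ∈ C h})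
        (fun h hh => hh.1) (fun t ht s hs => ⟨hs.1, hadm s t hs.1 hs.2 ht.2⟩) hx),
      (hΦ'.mono Icc_subset_Ici_self).setLIntegral_Icc_ofReal_eq_sub ENNReal.toReal_nonneg
        (fun y hy => (hΦ y hy.1).mono Icc_subset_Ici_self) (fun y hy => hΦ'_nonneg y hy.1),
      hΦ0, sub_zero]
  have hfiber : ∀ h, ENNReal.ofReal (ψ h) * volume ((·, h) ⁻¹' S) =
      (Ici 0).indicator (fun h => ENNReal.ofReal (Φ' h * (volume (C h)).toReal)) h := by
    intro h
    by_cases hh : 0 ≤ h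
    · have : (·, h) ⁻¹' S = C h := by ext x; simp [S, hh]
      rw [indicator_of_mem (mem_Ici.2 hh), this, ENNReal.ofReal_mul (hΦ'_nonneg h hh),
        ENNReal.ofReal_toReal (hfin h).ne, hψΦ' hh]
    · have : (·, h) ⁻¹' S = ∅ := by ext x; simp [S, hh]
      rw [indicator_of_notMem (notMem_Ici.2 (lt_of_not_ge hh)), this, measure_empty, mul_zero]
  rw [← lintegral_congr_ae hsection, lintegral_setLIntegral_prodMk_preimage hmeas
    hψ.ennreal_ofReal, restrict_Ioi_eq_restrict_Ici, ← lintegral_indicator measurableSet_Ici]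
  simp_rw [hfiber]

theorem stmt_6_general (C : ℝ → Set ℝ)
    (hadm : ∀ h₁ h₂ : ℝ, 0 ≤ h₁ → h₁ ≤ h₂ → C h₂ ⊆ C h₁)
    (hmeas : MeasurableSet {p : ℝ × ℝ | 0 ≤ p.2 ∧ p.1 ∈ C p.2})
    (hfin : ∀ h : ℝ, volume (C h) < ⊤)
    (hρfin : ∀ᵐ x : ℝ, volume {h : ℝ | 0 ≤ h ∧ x ∈ C h} ≠ ⊤)
    (Φ Φ' : ℝ → ℝ)
    (hΦdiff : ∀ x ∈ Ici (0:ℝ), HasDerivWithinAt Φ (Φ' x) (Ici 0) x)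
    (hΦconv : ConvexOn ℝ (Ici 0) Φ)
    (hΦ0 : Φ 0 = 0)
    (hΦ'nn : ∀ x ∈ Ici (0:ℝ), 0 ≤ Φ' x) :
    (∫ x : ℝ, Φ ((volume {h : ℝ | 0 ≤ h ∧ x ∈ C h}).toReal)) =
      ∫ h in Ioi (0:ℝ), Φ' h * (volume (C h)).toReal := by
  have hmono : MonotoneOn Φ' (Ici 0) := hΦconv.monotoneOn_of_hasDerivWithinAt_s6 hΦdiff
  have hΦ_nonneg : ∀ r, 0 ≤ r → 0 ≤ Φ r := fun r hr => by
    have hFTC := (hmono.mono Icc_subset_Ici_self).integral_eq_sub_of_hasDerivWithinAt hr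
      fun x hx => (hΦdiff x hx.1).mono Icc_subset_Ici_self
    rw [hΦ0, sub_zero] at hFTC
    exact hFTC ▸ intervalIntegral.integral_nonneg hr fun x hx => hΦ'nn x hx.1
  have hLHS_meas : AEStronglyMeasurable
      (fun x => Φ (volume {h : ℝ | 0 ≤ h ∧ x ∈ C h}).toReal) volume :=
    (ContinuousOn.measurable_comp (fun x hx => (hΦdiff x hx).continuousWithinAt)
      (measurable_measure_prodMk_left hmeas).ennreal_toReal
      fun _ => ENNReal.toReal_nonneg).aestronglyMeasurable
  have hRHS_meas : AEStronglyMeasurable (fun h => Φ' h * (volume (C h)).toReal)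
      (volume.restrict (Ioi 0)) := by
    have hvol : AntitoneOn (fun h => volume (C h)) (Ioi 0) :=
      fun a ha b _ hab => measure_mono (hadm a b (le_of_lt ha) hab)
    exact ((aemeasurable_restrict_of_monotoneOn measurableSet_Ioi
      (hmono.mono Ioi_subset_Ici_self)).mul (aemeasurable_restrict_of_antitoneOn
        measurableSet_Ioi hvol).ennreal_toReal).aestronglyMeasurable
  rw [integral_eq_lintegral_of_nonneg_ae
      (ae_of_all _ fun x => hΦ_nonneg _ ENNReal.toReal_nonneg) hLHS_meas,
    integral_eq_lintegral_of_nonneg_ae ((ae_restrict_iff' measurableSet_Ioi).2 (ae_of_all _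
      fun h hh => mul_nonneg (hΦ'nn h (le_of_lt hh)) ENNReal.toReal_nonneg)) hRHS_meas,
    lintegral_ofReal_comp_volume_sections_eq hadm hmeas hfin hρfin hΦdiff hmono hΦ'nn hΦ0]

/-- Lemma 4.2 (equality case): for admissible families the internal energy equals
the layer-cake expression. -/
theorem stmt_6 (C : ℝ → Set ℝ)
    (hadm : ∀ h₁ h₂ : ℝ, 0 ≤ h₁ → h₁ ≤ h₂ → C h₂ ⊆ C h₁)
    (hmeas : MeasurableSet {p : ℝ × ℝ | 0 ≤ p.2 ∧ p.1 ∈ C p.2})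
    (hfin : ∀ h : ℝ, volume (C h) < ⊤)
    (hρfin : ∀ᵐ x : ℝ, volume {h : ℝ | 0 ≤ h ∧ x ∈ C h} ≠ ⊤)
    (Φ Φ' : ℝ → ℝ)
    (hΦdiff : ∀ x ∈ Ici (0:ℝ), HasDerivWithinAt Φ (Φ' x) (Ici 0) x)
    (hΦconv : ConvexOn ℝ (Ici 0) Φ)
    (hΦ0 : Φ 0 = 0)
    (hΦ'nn : ∀ x ∈ Ici (0:ℝ), 0 ≤ Φ' x)
    (hint : IntegrableOn (fun h => Φ' h * (volume (C h)).toReal) (Ioi 0)) :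
    (∫ x : ℝ, Φ ((volume {h : ℝ | 0 ≤ h ∧ x ∈ C h}).toReal)) =
      ∫ h in Ioi (0:ℝ), Φ' h * (volume (C h)).toReal :=
  stmt_6_general C hadm hmeas hfin hρfin Φ Φ' hΦdiff hΦconv hΦ0 hΦ'nn
end

section
/- Let r > 0, x > 0, c > 0 and α > 0. Let g : ℝ → ℝ be measurable, odd (g(−z) = −g(z) for all z), integrable on bounded intervals, and satisfy g(z) ≥ c·(1 + z)^{−α} for all z > 0. Then ∫_{−r}^{r} g(x − y) dy ≥ 2c·(1 + r + x)^{−α} · min{r, x}. -/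
/-!
Substituting `z = x - y` turns the integral into `∫ g` over `[x - r, x + r]`. When `x < r`, the
part over the symmetric interval `[x - r, r - x]` vanishes because `g` is odd, so in all cases
the integral equals `∫ g` over `[|x - r|, x + r]`, an interval of length `2 min r x` inside
`(0, r + x]`. There `g` is bounded below by `c (1 + r + x) ^ (-α)`, since `(1 + z) ^ (-α)`
is decreasing.
-/

open MeasureTheory Set

namespace intervalIntegral

theorem integral_neg_to_self_eq_zero_of_odd {g : ℝ → ℝ} (hodd : ∀ z, g (-z) = -g z) (s : ℝ) :
    ∫ z in (-s)..s, g z = 0 := by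
  have h := integral_comp_neg g (a := -s) (b := s)
  simp only [hodd, neg_neg, integral_neg] at h
  linarith

theorem integral_comp_sub_left_eq_integral_abs_of_odd {g : ℝ → ℝ}
    (hodd : ∀ z, g (-z) = -g z) (hloc : ∀ a b : ℝ, IntervalIntegrable g volume a b) (r x : ℝ) :
    ∫ y in (-r)..r, g (x - y) = ∫ z in |x - r|..(x + r), g z := by
  rw [integral_comp_sub_left g x, sub_neg_eq_add,
    ← integral_add_adjacent_intervals (hloc (x - r) |x - r|) (hloc |x - r| (x + r))]
  rcases le_total 0 (x - r) with h | h
  · rw [abs_of_nonneg h, integral_same, zero_add]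
  · rw [abs_of_nonpos h, neg_sub, add_eq_right]
    simpa using integral_neg_to_self_eq_zero_of_odd hodd (r - x)

theorem mul_sub_le_integral_of_le {g : ℝ → ℝ} {a b m : ℝ} (hab : a ≤ b)
    (hg : IntervalIntegrable g volume a b) (hm : ∀ z ∈ Ioo a b, m ≤ g z) :
    m * (b - a) ≤ ∫ z in a..b, g z := by
  calc m * (b - a) = ∫ _ in a..b, m := by rw [integral_const, smul_eq_mul, mul_comm]
    _ ≤ ∫ z in a..b, g z := integral_mono_on_of_le_Ioo hab intervalIntegrable_const hg hm

end intervalIntegral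

theorem stmt_8_general (r x c α : ℝ) (hr : 0 < r) (hx : 0 < x) (hc : 0 < c) (hα : 0 < α)
    (g : ℝ → ℝ)
    (hodd : ∀ z : ℝ, g (-z) = -g z)
    (hloc : ∀ a b : ℝ, IntervalIntegrable g volume a b)
    (hlow : ∀ z : ℝ, 0 < z → c * (1 + z) ^ (-α) ≤ g z) :
    2 * c * (1 + r + x) ^ (-α) * min r x ≤ ∫ y in (-r)..r, g (x - y) := by
  have hlength : x + r - |x - r| = 2 * min r x := by
    rw [← max_sub_min_eq_abs', min_comm r x]; linarith [min_add_max x r]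
  have hbound : ∀ z ∈ Ioo |x - r| (x + r), c * (1 + r + x) ^ (-α) ≤ g z := fun z hz =>
    have hz0 : 0 < z := (abs_nonneg _).trans_lt hz.1
    calc c * (1 + r + x) ^ (-α) ≤ c * (1 + z) ^ (-α) := mul_le_mul_of_nonneg_left
          (Real.rpow_le_rpow_of_nonpos (by linarith) (by linarith [hz.2]) (by linarith)) hc.le
      _ ≤ g z := hlow z hz0
  rw [intervalIntegral.integral_comp_sub_left_eq_integral_abs_of_odd hodd hloc,
    show 2 * c * (1 + r + x) ^ (-α) * min r x = c * (1 + r + x) ^ (-α) * (x + r - |x - r|) by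
      rw [hlength]; ring]
  have hle : |x - r| ≤ x + r := abs_sub_le_iff.2 ⟨by linarith, by linarith⟩
  exact intervalIntegral.mul_sub_le_integral_of_le hle (hloc _ _) hbound

/-- Lemma 4.4: interaction energy decay rate of a point mass moving toward the
center of a symmetric interval. -/
theorem stmt_8 (r x c α : ℝ) (hr : 0 < r) (hx : 0 < x) (hc : 0 < c) (hα : 0 < α)
    (g : ℝ → ℝ) (hgm : Measurable g)
    (hodd : ∀ z : ℝ, g (-z) = -g z)
    (hloc : ∀ a b : ℝ, IntervalIntegrable g volume a b)
    (hlow : ∀ z : ℝ, 0 < z → c * (1 + z) ^ (-α) ≤ g z) :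
    2 * c * (1 + r + x) ^ (-α) * min r x ≤ ∫ y in (-r)..r, g (x - y) :=
  stmt_8_general r x c α hr hx hc hα g hodd hloc hlow
end

section
/- Let W : ℝ → ℝ be even (W(−z) = W(z) for all z) and nondecreasing on [0,∞), and let r₁, r₂ > 0. Then for all real numbers d, d' with |d| ≤ |d'|, ∫_{−r₁}^{r₁} ∫_{−r₂}^{r₂} W(x − y − d) dy dx ≤ ∫_{−r₁}^{r₁} ∫_{−r₂}^{r₂} W(x − y − d') dy dx. Consequently, the interaction integral ∫_{c₁−r₁}^{c₁+r₁} ∫_{c₂−r₂}^{c₂+r₂} W(u − v) dv du between two intervals depends only on the distance |c₁ − c₂| between their centers and is nondecreasing in it. -/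
/-!
Convolving with the indicator of `[-r, r]`, i.e. passing to `t ↦ ∫_{t-r}^{t+r} W`, preserves being
even and nondecreasing on `[0, ∞)`: moving the window from `s` to `t ≥ s ≥ 0` trades the values of
`W` on `[s - r, t - r]` for those on `[s + r, t + r]`, which are pointwise larger because
`|u - 2r| ≤ u` there. The interaction integral at offset `d` is this convolution applied twice,
evaluated at `-d`, so it is an even function of `d`, nondecreasing in `|d|`.
-/

open MeasureTheory Set

noncomputable def windowIntegral (r : ℝ) (W : ℝ → ℝ) (t : ℝ) : ℝ :=
  ∫ u in (t - r)..(t + r), W u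

namespace Function.Even

variable {W : ℝ → ℝ}

theorem apply_abs (hW : W.Even) (x : ℝ) : W |x| = W x := by
  rcases abs_choice x with h | h
  · rw [h]
  · rw [h, hW]

theorem le_of_abs_le (hW : W.Even) (hmono : MonotoneOn W (Ici 0)) {a b : ℝ} (h : |a| ≤ |b|) :
    W a ≤ W b := by
  rw [← hW.apply_abs a, ← hW.apply_abs b]
  exact hmono (abs_nonneg a) (abs_nonneg b) h

theorem antitoneOn_Iic (hW : W.Even) (hmono : MonotoneOn W (Ici 0)) : AntitoneOn W (Iic 0) := by
  intro x hx y hy hxy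
  rw [← hW x, ← hW y]
  exact hmono (mem_Ici.2 (neg_nonneg.2 hy)) (mem_Ici.2 (neg_nonneg.2 hx)) (neg_le_neg hxy)

theorem intervalIntegrable (hW : W.Even) (hmono : MonotoneOn W (Ici 0)) (a b : ℝ) :
    IntervalIntegrable W volume a b := by
  set M := |a| + |b|
  have hM : 0 ≤ M := by positivity
  have hneg : IntervalIntegrable W volume (-M) 0 := by
    refine ((hW.antitoneOn_Iic hmono).mono ?_).intervalIntegrable
    rw [uIcc_of_le (neg_nonpos.2 hM)]
    exact Icc_subset_Iic_self
  have hpos : IntervalIntegrable W volume 0 M := by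
    refine (hmono.mono ?_).intervalIntegrable
    rw [uIcc_of_le hM]
    exact Icc_subset_Ici_self
  have hmem (x : ℝ) (hx : |x| ≤ M) : x ∈ uIcc (-M) M := by
    rw [uIcc_of_le (by linarith)]
    exact abs_le.1 hx
  exact (hneg.trans hpos).mono_set <| uIcc_subset_uIcc
    (hmem a (le_add_of_nonneg_right (abs_nonneg b))) (hmem b (le_add_of_nonneg_left (abs_nonneg a)))

theorem even_windowIntegral (hW : W.Even) (r : ℝ) : (windowIntegral r W).Even := by
  intro t
  have h := intervalIntegral.integral_comp_neg (a := t - r) (b := t + r) W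
  rw [show (fun x ↦ W (-x)) = W from funext hW] at h
  rw [_root_.windowIntegral, _root_.windowIntegral, h]
  congr 1 <;> ring

theorem monotoneOn_windowIntegral (hW : W.Even) (hmono : MonotoneOn W (Ici 0)) {r : ℝ}
    (hr : 0 ≤ r) : MonotoneOn (windowIntegral r W) (Ici 0) := by
  intro s (hs : 0 ≤ s) t _ hst
  have hint := hW.intervalIntegrable hmono
  have hshift : (∫ u in (s - r)..(t - r), W u) = ∫ u in (s + r)..(t + r), W (u - 2 * r) := by
    rw [intervalIntegral.integral_comp_sub_right]
    ring_nf
  have hle : (∫ u in (s + r)..(t + r), W (u - 2 * r)) ≤ ∫ u in (s + r)..(t + r), W u := by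
    refine intervalIntegral.integral_mono_on (by linarith) ?_ (hint _ _) fun u hu ↦ ?_
    · simpa using (hint (s + r - 2 * r) (t + r - 2 * r)).comp_sub_right (2 * r)
    · have hu0 : 0 ≤ u := by linarith [hu.1, hs]
      refine hW.le_of_abs_le hmono ?_
      rw [abs_of_nonneg hu0]
      exact abs_le.2 ⟨by linarith [hu.1, hs], by linarith⟩
  have hdiff := intervalIntegral.integral_interval_sub_interval_comm
    (hint (s - r) (s + r)) (hint (t - r) (t + r)) (hint (s - r) (t - r))
  simp only [windowIntegral]
  linarith

end Function.Even

theorem integral_integral_sub_sub_eq_windowIntegral (W : ℝ → ℝ) (r₁ r₂ c : ℝ) :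
    (∫ x in (-r₁)..r₁, ∫ y in (-r₂)..r₂, W (x - y - c)) =
      windowIntegral r₁ (windowIntegral r₂ W) (-c) := by
  have hinner (x : ℝ) : (∫ y in (-r₂)..r₂, W (x - y - c)) = windowIntegral r₂ W (x - c) := by
    simp_rw [sub_right_comm x _ c]
    rw [intervalIntegral.integral_comp_sub_left, windowIntegral]
    ring_nf
  simp_rw [hinner]
  rw [intervalIntegral.integral_comp_sub_right, windowIntegral]
  ring_nf

/-- Lemma 4.5: the interaction integral between two intervals is nondecreasing in
the distance between their centers. -/
theorem stmt_9 (W : ℝ → ℝ)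
    (heven : ∀ z : ℝ, W (-z) = W z)
    (hmono : MonotoneOn W (Ici 0))
    (r₁ r₂ : ℝ) (hr₁ : 0 < r₁) (hr₂ : 0 < r₂) :
    ∀ d d' : ℝ, |d| ≤ |d'| →
      (∫ x in (-r₁)..r₁, ∫ y in (-r₂)..r₂, W (x - y - d)) ≤
        ∫ x in (-r₁)..r₁, ∫ y in (-r₂)..r₂, W (x - y - d') := by
  intro d d' hdd'
  have hW : W.Even := heven
  have hG : (windowIntegral r₂ W).Even := hW.even_windowIntegral r₂
  rw [integral_integral_sub_sub_eq_windowIntegral, integral_integral_sub_sub_eq_windowIntegral]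
  refine (hG.even_windowIntegral r₁).le_of_abs_le ?_ (by rwa [abs_neg, abs_neg])
  exact hG.monotoneOn_windowIntegral (hW.monotoneOn_windowIntegral hmono hr₂.le) hr₁.le
end

section
/- Let 0 < f₁ ≤ f₂ and let a be a real number with 1/(2f₁) < a < 1/(2f₁) + 1/(4f₂). Then a satisfies condition (C), i.e. |1/(2f₁) − 1/(2f₂)| < a < 1/(2f₁) + 1/(2f₂), and moreover |κ_a| < 1/2, where κ_a := f₁f₂(2a² − 1/(2f₁²) − 1/(2f₂²)). In particular, the set of a for which |κ_a| ≤ 1/2 and condition (C) hold contains an interval of length 1/(4f₂). -/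
open MeasureTheory Set

/-- The interval (1/(2f₁), 1/(2f₁)+1/(4f₂)) consists of values of `a` satisfying
condition (C) with |κ_a| < 1/2. -/
theorem stmt_12 (f₁ f₂ a : ℝ) (hf₁ : 0 < f₁) (h12 : f₁ ≤ f₂)
    (ha₁ : 1 / (2 * f₁) < a) (ha₂ : a < 1 / (2 * f₁) + 1 / (4 * f₂)) :
    (|1 / (2 * f₁) - 1 / (2 * f₂)| < a ∧ a < 1 / (2 * f₁) + 1 / (2 * f₂)) ∧
    |f₁ * f₂ * (2 * a ^ 2 - 1 / (2 * f₁ ^ 2) - 1 / (2 * f₂ ^ 2))| < 1 / 2 := by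
  have hf₂ : 0 < f₂ := lt_of_lt_of_le hf₁ h12
  have hv : 0 < 1 / (2 * f₂) := by positivity
  have huv : 1 / (2 * f₂) ≤ 1 / (2 * f₁) := by
    apply one_div_le_one_div_of_le (by positivity); linarith
  have ha0 : 0 < a := lt_trans (by positivity) ha₁
  have hA : 1 < a * (2 * f₁) := (div_lt_iff₀ (by positivity)).mp ha₁
  have hB : a * (4 * (f₁ * f₂)) < 2 * f₂ + f₁ := by
    have key : (1 / (2 * f₁) + 1 / (4 * f₂)) * (4 * (f₁ * f₂)) = 2 * f₂ + f₁ := by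
      field_simp; ring
    have := mul_lt_mul_of_pos_right ha₂ (show (0:ℝ) < 4 * (f₁ * f₂) by positivity)
    rw [key] at this; exact this
  have hq : 1 / (4 * f₂) < 1 / (2 * f₂) := by
    apply one_div_lt_one_div_of_lt <;> linarith
  refine ⟨⟨?_, ?_⟩, ?_⟩
  · rw [abs_lt]; constructor <;> linarith
  · linarith
  · have hk : f₁ * f₂ * (2 * a ^ 2 - 1 / (2 * f₁ ^ 2) - 1 / (2 * f₂ ^ 2)) =
        (4 * f₁ ^ 2 * f₂ ^ 2 * a ^ 2 - f₂ ^ 2 - f₁ ^ 2) / (2 * (f₁ * f₂)) := by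
      field_simp; ring
    rw [hk, abs_div, abs_of_pos (show (0:ℝ) < 2 * (f₁ * f₂) by positivity), div_lt_iff₀ (by positivity), abs_lt]
    constructor
    · have h3 : 1 < (a * (2 * f₁)) ^ 2 := by nlinarith
      have h4 : f₂ ^ 2 < 4 * f₁ ^ 2 * f₂ ^ 2 * a ^ 2 := by
        nlinarith [mul_lt_mul_of_pos_left h3 (show (0:ℝ) < f₂ ^ 2 by positivity)]
      have h5 : f₁ ^ 2 ≤ f₁ * f₂ := by nlinarith
      linarith
    · nlinarith [mul_pos hf₁ hf₂, mul_pos ha0 hf₂, mul_pos ha0 hf₁, sq_nonneg (f₂ - f₁), mul_pos (mul_pos ha0 hf₁) hf₂]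
end

section
/- Let ρ : ℝ → [0,∞) be measurable with ∫_ℝ ρ(x) dx = 1, and suppose h : [0,1] → [0,∞) satisfies ∫_ℝ min{ρ(x), h(s)} dx = s for every s ∈ [0,1]. Let Φ : [0,∞) → ℝ be continuously differentiable with Φ(0) = 0. Then ∫_ℝ Φ(ρ(x)) dx = ∫_0^1 Φ'(h(s)) ds. -/
/-!
Let `ν = layerMeasure volume ρ` be the image of Lebesgue measure on the subgraph
`{(x, t) | 0 < t ≤ ρ x}` under the height `(x, t) ↦ t`. Since `ρ ≤ h 1` a.e., Fubini gives
`∫ Φ (ρ x) dx = ∫ x, ∫ t in 0..ρ x, Φ' t = ∫ Φ' dν`. Moreover `ν (Iic τ) = ∫ min (ρ x) τ dx`, so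
the hypothesis on `h` says that `h` is a quantile function of the probability measure `ν`. Hence
`h` pushes Lebesgue measure on `(0, 1]` forward to `ν`, and `∫ s in 0..1, Φ' (h s) = ∫ Φ' dν`.
-/

open MeasureTheory Set

section

variable {α : Type*} [MeasurableSpace α] {μ : Measure α} {f : α → ℝ}

theorem MeasureTheory.Integrable.min_const (hf : Integrable f μ) {c : ℝ} (hc : 0 ≤ c) :
    Integrable (fun x => min (f x) c) μ := by
  refine hf.mono (hf.aestronglyMeasurable.inf aestronglyMeasurable_const) (ae_of_all _ fun x => ?_)
  rcases le_total (f x) c with hfc | hcf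
  · rw [min_eq_left hfc]
  · rw [min_eq_right hcf, Real.norm_eq_abs, Real.norm_eq_abs, abs_of_nonneg hc,
      abs_of_nonneg (hc.trans hcf)]
    exact hcf

theorem ae_le_of_integral_min_eq (hf : Integrable f μ) {c : ℝ} (hc : 0 ≤ c)
    (heq : ∫ x, min (f x) c ∂μ = ∫ x, f x ∂μ) :
    ∀ᵐ x ∂μ, f x ≤ c := by
  have hgap : ∫ x, (f x - min (f x) c) ∂μ = 0 := by
    rw [integral_sub hf (hf.min_const hc), heq, sub_self]
  filter_upwards [(integral_eq_zero_iff_of_nonneg (fun x => sub_nonneg.2 (min_le_left _ c))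
    (hf.sub (hf.min_const hc))).1 hgap] with x hx
  exact sub_eq_zero.1 hx ▸ min_le_right _ _

noncomputable def layerMeasure (μ : Measure α) (f : α → ℝ) : Measure ℝ :=
  ((μ.prod volume).restrict {p : α × ℝ | p.2 ∈ Ioc 0 (f p.1)}).map Prod.snd

theorem measurableSet_subgraph (hf : Measurable f) :
    MeasurableSet {p : α × ℝ | p.2 ∈ Ioc 0 (f p.1)} :=
  (measurableSet_lt measurable_const measurable_snd).inter
    (measurableSet_le measurable_snd (hf.comp measurable_fst))

theorem layerMeasure_apply (hf : Measurable f) {B : Set ℝ} (hB : MeasurableSet B) :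
    layerMeasure μ f B = ∫⁻ x, volume (Ioc 0 (f x) ∩ B) ∂μ := by
  rw [layerMeasure, Measure.map_apply measurable_snd hB,
    Measure.restrict_apply (measurable_snd hB), inter_comm,
    Measure.prod_apply ((measurableSet_subgraph hf).inter (measurable_snd hB))]
  rfl

theorem layerMeasure_Iic (hf : Measurable f) (τ : ℝ) :
    layerMeasure μ f (Iic τ) = ∫⁻ x, ENNReal.ofReal (min (f x) τ) ∂μ := by
  simp only [layerMeasure_apply hf measurableSet_Iic, Ioc_inter_Iic, Real.volume_Ioc, sub_zero]

theorem layerMeasure_univ (hf : Measurable f) :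
    layerMeasure μ f univ = ∫⁻ x, ENNReal.ofReal (f x) ∂μ := by
  simp only [layerMeasure_apply hf MeasurableSet.univ, inter_univ, Real.volume_Ioc, sub_zero]

theorem layerMeasure_real_Iic (hf : Measurable f) (hf0 : ∀ x, 0 ≤ f x) {τ : ℝ}
    (hτ : 0 ≤ τ) :
    (layerMeasure μ f).real (Iic τ) = ∫ x, min (f x) τ ∂μ := by
  rw [measureReal_def, layerMeasure_Iic hf, integral_eq_lintegral_of_nonneg_ae
    (ae_of_all _ fun x => le_min (hf0 x) hτ) (hf.min measurable_const).aestronglyMeasurable]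

theorem integral_layerMeasure [SFinite μ] (hf : Measurable f) (hf0 : ∀ x, 0 ≤ f x)
    {ψ : ℝ → ℝ} (hψ : Integrable ψ (layerMeasure μ f)) :
    ∫ t, ψ t ∂layerMeasure μ f = ∫ x, (∫ t in 0..f x, ψ t) ∂μ := by
  have hS := measurableSet_subgraph hf
  have hψS : Integrable (fun p : α × ℝ => ψ p.2) ((μ.prod volume).restrict _) :=
    (integrable_map_measure hψ.aestronglyMeasurable measurable_snd.aemeasurable).1 hψ
  rw [layerMeasure, integral_map measurable_snd.aemeasurable hψ.aestronglyMeasurable,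
    ← integral_indicator hS, integral_prod _ ((integrable_indicator_iff hS).2 hψS)]
  refine integral_congr_ae (ae_of_all _ fun x => ?_)
  dsimp only
  rw [intervalIntegral.integral_of_le (hf0 x), ← integral_indicator measurableSet_Ioc]
  rfl

end

theorem monotoneOn_of_measureReal_Iic_comp_eq {ν : Measure ℝ} [IsFiniteMeasure ν]
    {h : ℝ → ℝ} {S : Set ℝ} (hh : ∀ s ∈ S, ν.real (Iic (h s)) = s) : MonotoneOn h S := by
  intro a ha b hb hab
  by_contra! hlt
  have hba : b ≤ a := by
    simpa only [hh a ha, hh b hb] using measureReal_mono (μ := ν) (Iic_subset_Iic.2 hlt.le)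
  exact hlt.ne (by rw [le_antisymm hab hba])

theorem map_volume_restrict_Ioc_eq_of_measureReal_Iic_comp_eq {ν : Measure ℝ}
    [IsProbabilityMeasure ν] {h : ℝ → ℝ} (hh : ∀ s ∈ Ioc (0:ℝ) 1, ν.real (Iic (h s)) = s) :
    (volume.restrict (Ioc 0 1)).map h = ν := by
  have hmeas := aemeasurable_restrict_of_monotoneOn (μ := volume) measurableSet_Ioc
    (monotoneOn_of_measureReal_Iic_comp_eq hh)
  refine Measure.ext_of_Iic _ _ fun τ => ?_
  rw [Measure.map_apply_of_aemeasurable hmeas measurableSet_Iic,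
    Measure.restrict_apply' measurableSet_Ioc, ← ofReal_measureReal (μ := ν)]
  set F := ν.real (Iic τ)
  have hF1 : F ≤ 1 := measureReal_le_one
  refine le_antisymm ?_ ?_
  · calc volume (h ⁻¹' Iic τ ∩ Ioc 0 1) ≤ volume (Ioc 0 F) := by
          refine measure_mono fun s ⟨hsτ, hs⟩ => ⟨hs.1, ?_⟩
          rw [← hh s hs]
          exact measureReal_mono (Iic_subset_Iic.2 hsτ)
      _ = ENNReal.ofReal F := by rw [Real.volume_Ioc, sub_zero]
  · calc ENNReal.ofReal F = volume (Ioo 0 F) := by rw [Real.volume_Ioo, sub_zero]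
      _ ≤ volume (h ⁻¹' Iic τ ∩ Ioc 0 1) := by
          refine measure_mono fun s ⟨hs0, hsF⟩ => ?_
          have hs : s ∈ Ioc (0:ℝ) 1 := ⟨hs0, hsF.le.trans hF1⟩
          refine ⟨show h s ≤ τ from ?_, hs⟩
          by_contra! hτs
          refine hsF.not_ge ?_
          rw [← hh s hs]
          exact measureReal_mono (Iic_subset_Iic.2 hτs.le)

theorem intervalIntegral.integral_eq_sub_of_hasDerivWithinAt_Ici {Φ Φ' : ℝ → ℝ} {a b : ℝ}
    (hΦ : ∀ x ∈ Ici a, HasDerivWithinAt Φ (Φ' x) (Ici a) x) (hΦ' : ContinuousOn Φ' (Ici a))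
    (hab : a ≤ b) : ∫ t in a..b, Φ' t = Φ b - Φ a :=
  intervalIntegral.integral_eq_sub_of_hasDeriv_right_of_le hab
    (fun x hx => (hΦ x hx.1).continuousWithinAt.mono Icc_subset_Ici_self)
    (fun x hx => ((hΦ x hx.1.le).hasDerivAt (Ici_mem_nhds hx.1)).hasDerivWithinAt)
    ((hΦ'.mono Icc_subset_Ici_self).intervalIntegrable_of_Icc hab)

/-- Lemma 6.5 (internal-energy part): the internal energy in terms of the
h(s)-representation. -/
theorem stmt_17 (ρ : ℝ → ℝ) (hρm : Measurable ρ) (hρnn : ∀ x : ℝ, 0 ≤ ρ x)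
    (hρint : Integrable ρ) (hmass : (∫ x : ℝ, ρ x) = 1)
    (h : ℝ → ℝ) (hhnn : ∀ s ∈ Icc (0:ℝ) 1, 0 ≤ h s)
    (hrep : ∀ s ∈ Icc (0:ℝ) 1, (∫ x : ℝ, min (ρ x) (h s)) = s)
    (Φ Φ' : ℝ → ℝ)
    (hΦdiff : ∀ x ∈ Ici (0:ℝ), HasDerivWithinAt Φ (Φ' x) (Ici 0) x)
    (hΦ'cont : ContinuousOn Φ' (Ici 0))
    (hΦ0 : Φ 0 = 0) :
    ∫ x : ℝ, Φ (ρ x) = ∫ s in (0:ℝ)..1, Φ' (h s) := by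
  have h1 : (1:ℝ) ∈ Icc (0:ℝ) 1 := right_mem_Icc.2 zero_le_one
  have hc : 0 ≤ h 1 := hhnn 1 h1
  have : IsProbabilityMeasure (layerMeasure volume ρ) := ⟨by
    rw [layerMeasure_univ hρm, ← ofReal_integral_eq_lintegral_ofReal hρint (ae_of_all _ hρnn),
      hmass, ENNReal.ofReal_one]⟩
  have hquantile : ∀ s ∈ Ioc (0:ℝ) 1, (layerMeasure volume ρ).real (Iic (h s)) = s :=
    fun s hs => by
      rw [layerMeasure_real_Iic hρm hρnn (hhnn s (Ioc_subset_Icc_self hs)),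
        hrep s (Ioc_subset_Icc_self hs)]
  have hmono := monotoneOn_of_measureReal_Iic_comp_eq hquantile
  -- `Φ'` need not be measurable on `ℝ`; clamping gives a bounded continuous function that agrees
  -- with it on the ranges of `ρ` (a.e.) and of `h` on `(0, 1]`.
  set Ψ : ℝ → ℝ := fun t => Φ' (projIcc 0 (h 1) hc t)
  have hΨ : Continuous Ψ := hΦ'cont.comp_continuous (continuous_subtype_val.comp
    continuous_projIcc) fun t => (projIcc 0 (h 1) hc t).2.1
  have hΨeq : EqOn Ψ Φ' (Icc 0 (h 1)) := fun t ht => by simp only [Ψ, projIcc_of_mem hc ht]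
  obtain ⟨C, hC⟩ := isCompact_Icc.exists_bound_of_continuousOn (hΦ'cont.mono
    (Icc_subset_Ici_self : Icc 0 (h 1) ⊆ Ici 0))
  have hΨint : Integrable Ψ (layerMeasure volume ρ) :=
    .of_bound hΨ.aestronglyMeasurable C (ae_of_all _ fun t => hC _ (projIcc 0 (h 1) hc t).2)
  have hρc : ∀ᵐ x, ρ x ≤ h 1 :=
    ae_le_of_integral_min_eq hρint hc (by rw [hrep 1 h1, hmass])
  have hLHS : ∀ᵐ x, Φ (ρ x) = ∫ t in 0..ρ x, Ψ t := hρc.mono fun x hx => by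
    rw [intervalIntegral.integral_congr (hΨeq.mono (uIcc_of_le (hρnn x) ▸
      Icc_subset_Icc_right hx)), intervalIntegral.integral_eq_sub_of_hasDerivWithinAt_Ici
      hΦdiff hΦ'cont (hρnn x), hΦ0, sub_zero]
  calc ∫ x, Φ (ρ x) = ∫ x, ∫ t in 0..ρ x, Ψ t := integral_congr_ae hLHS
    _ = ∫ t, Ψ t ∂layerMeasure volume ρ := (integral_layerMeasure hρm hρnn hΨint).symm
    _ = ∫ s in Ioc 0 1, Ψ (h s) := by
        rw [← map_volume_restrict_Ioc_eq_of_measureReal_Iic_comp_eq hquantile,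
          integral_map (aemeasurable_restrict_of_monotoneOn measurableSet_Ioc hmono)
            hΨ.aestronglyMeasurable]
    _ = ∫ s in (0:ℝ)..1, Φ' (h s) := by
        rw [intervalIntegral.integral_of_le zero_le_one]
        exact setIntegral_congr_fun measurableSet_Ioc fun s hs =>
          hΨeq ⟨hhnn s (Ioc_subset_Icc_self hs), hmono hs (right_mem_Ioc.2 one_pos) hs.2⟩
end
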